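/- arXiv:2503.10524 — 7 statements merged into one kernel-verified Lean document; each statement's English description precedes it below -/
import Mathlib

section
/- Let 𝒜 be an abelian category, let B be a Serre subcategory of 𝒜, and let (C_i)_{i ∈ I} be a family of Serre subcategories of 𝒜 indexed by a set I. Then B ∩ ⟨⋃_{i ∈ I} C_i⟩ = ⟨⋃_{i ∈ I} (B ∩ C_i)⟩, where ⟨T⟩ denotes the smallest Serre subcategory of 𝒜 containing the class of objects T. (This is the infinite distributive law making the partially ordered set of Serre subcategories of 𝒜, ordered by inclusion, with meets given by intersection and joins given by the generated Serre subcategory, into a frame.) -/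
open CategoryTheory

/-- A Serre subcategory of an abelian category `𝒜`, viewed as a class of objects: closed under
isomorphism, containing the zero objects, and such that for every short exact sequence
`0 → A → B → C → 0` the middle object belongs to the class iff both outer objects do. -/
def IsSerreSubcategory {𝒜 : Type*} [Category 𝒜] [Abelian 𝒜] (S : Set 𝒜) : Prop :=
  (∀ X Y : 𝒜, (X ≅ Y) → X ∈ S → Y ∈ S) ∧
  (∀ X : 𝒜, Limits.IsZero X → X ∈ S) ∧
  (∀ C : ShortComplex 𝒜, C.ShortExact → (C.X₂ ∈ S ↔ C.X₁ ∈ S ∧ C.X₃ ∈ S))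

/-- The Serre subcategory generated by a class of objects `T`: the intersection of all Serre
subcategories containing `T`. -/
def serreGenerated {𝒜 : Type*} [Category 𝒜] [Abelian 𝒜] (T : Set 𝒜) : Set 𝒜 :=
  ⋂₀ {S : Set 𝒜 | IsSerreSubcategory S ∧ T ⊆ S}

/-!
The inclusion `⟨⋃ i, B ∩ C i⟩ ⊆ B ∩ ⟨⋃ i, C i⟩` is formal. For the converse, let `G` be the
right-hand side and let `B ⇨ G`, the Heyting implication of the frame, be the class of objects all of
whose subquotients lying in `B` lie in `G`. Each `C i` is contained in `B ⇨ G`, because `C i` is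
closed under subquotients, and `B ⇨ G` is a Serre subcategory: a subquotient `Y` of the middle
term of a short exact sequence is an extension of a subquotient of the first term by a subquotient
of the last, and if `Y ∈ B` both pieces are again in `B`. Hence `⟨⋃ i, C i⟩ ⊆ B ⇨ G`, and every
`X ∈ B ∩ ⟨⋃ i, C i⟩`, being a subquotient of itself, lies in `G`.
-/

open CategoryTheory.Limits

section

variable {𝒜 : Type*} [Category 𝒜]

def IsSubquotient (Y X : 𝒜) : Prop :=
  ∃ (W : 𝒜) (i : W ⟶ X) (p : W ⟶ Y), Mono i ∧ Epi p

namespace IsSubquotient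

lemma refl (X : 𝒜) : IsSubquotient X X :=
  ⟨X, 𝟙 X, 𝟙 X, inferInstance, inferInstance⟩

lemma of_mono {X Y : 𝒜} (i : Y ⟶ X) [Mono i] : IsSubquotient Y X :=
  ⟨Y, i, 𝟙 Y, inferInstance, inferInstance⟩

lemma of_epi {X Y : 𝒜} (p : X ⟶ Y) [Epi p] : IsSubquotient Y X :=
  ⟨X, 𝟙 X, p, inferInstance, inferInstance⟩

end IsSubquotient

def serreHimp (B G : Set 𝒜) : Set 𝒜 :=
  {X | ∀ Y, IsSubquotient Y X → Y ∈ B → Y ∈ G}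

lemma inter_serreHimp_subset (B G : Set 𝒜) : B ∩ serreHimp B G ⊆ G :=
  fun X ⟨hXB, hX⟩ => hX X (.refl X) hXB

variable [Abelian 𝒜]

namespace IsSubquotient

lemma trans {X Y Z : 𝒜} (hZY : IsSubquotient Z Y) (hYX : IsSubquotient Y X) :
    IsSubquotient Z X := by
  obtain ⟨W, i, p, _, _⟩ := hYX
  obtain ⟨V, j, q, _, _⟩ := hZY
  -- in an abelian category the pullback of an epimorphism is an epimorphism
  exact ⟨pullback p j, pullback.fst p j ≫ i, pullback.snd p j ≫ q, mono_comp _ _, epi_comp _ _⟩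

lemma isZero {X Y : 𝒜} (h : IsSubquotient Y X) (hX : IsZero X) : IsZero Y := by
  obtain ⟨W, i, p, _, _⟩ := h
  exact (hX.of_mono i).of_epi p

end IsSubquotient

lemma shortExact_of_mono {A X : 𝒜} (i : A ⟶ X) [Mono i] :
    (ShortComplex.mk i (cokernel.π i) (cokernel.condition i)).ShortExact where
  exact := ShortComplex.exact_of_g_is_cokernel _ (cokernelIsCokernel i)

lemma shortExact_of_epi {X Y : 𝒜} (p : X ⟶ Y) [Epi p] :
    (ShortComplex.mk (kernel.ι p) p (kernel.condition p)).ShortExact where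
  exact := ShortComplex.exact_of_f_is_kernel _ (kernelIsKernel p)

/-- For `Y` a quotient of `W ⊆ X₂`, the subobject is the image of `W ∩ X₁` in `Y`; the cokernel
is then a quotient of the image of `W` in `X₃`. -/
lemma CategoryTheory.ShortComplex.ShortExact.exists_extension_of_isSubquotient
    {S : ShortComplex 𝒜} (hS : S.ShortExact) {Y : 𝒜} (hY : IsSubquotient Y S.X₂) :
    ∃ (Y₁ : 𝒜) (ι : Y₁ ⟶ Y), Mono ι ∧
      IsSubquotient Y₁ S.X₁ ∧ IsSubquotient (cokernel ι) S.X₃ := by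
  obtain ⟨W, i, p, _, _⟩ := hY
  have := hS.mono_f
  let h : pullback i S.f ⟶ Y := pullback.fst i S.f ≫ p
  let ι := Abelian.image.ι h
  refine ⟨Abelian.image h, ι, inferInstance,
    ⟨_, pullback.snd i S.f, Abelian.factorThruImage h, inferInstance, inferInstance⟩, ?_⟩
  let q : W ⟶ S.X₃ := i ≫ S.g
  have hker : kernel.ι q ≫ p ≫ cokernel.π ι = 0 := by
    have hl := hS.exact.lift_f (kernel.ι q ≫ i) (by rw [Category.assoc]; exact kernel.condition q)
    let m : kernel q ⟶ pullback i S.f := pullback.lift (kernel.ι q) _ hl.symm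
    calc kernel.ι q ≫ p ≫ cokernel.π ι
        = m ≫ h ≫ cokernel.π ι := by simp only [m, h, Category.assoc, pullback.lift_fst_assoc]
      _ = m ≫ (Abelian.factorThruImage h ≫ ι) ≫ cokernel.π ι := by rw [Abelian.image.fac]
      _ = 0 := by simp
  let e : Abelian.coimage q ⟶ cokernel ι := cokernel.desc (kernel.ι q) (p ≫ cokernel.π ι) hker
  have : Epi (p ≫ cokernel.π ι) := epi_comp _ _
  have : Epi e := epi_of_epi_fac (cokernel.π_desc _ _ _)
  exact ⟨Abelian.coimage q, Abelian.factorThruCoimage q, e, inferInstance, this⟩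

namespace IsSerreSubcategory

lemma mem_of_isSubquotient {S : Set 𝒜} (hS : IsSerreSubcategory S) {X Y : 𝒜}
    (h : IsSubquotient Y X) (hX : X ∈ S) : Y ∈ S := by
  obtain ⟨W, i, p, _, _⟩ := h
  have hW : W ∈ S := ((hS.2.2 _ (shortExact_of_mono i)).1 hX).1
  exact ((hS.2.2 _ (shortExact_of_epi p)).1 hW).2

lemma sInter {𝒮 : Set (Set 𝒜)} (h𝒮 : ∀ S ∈ 𝒮, IsSerreSubcategory S) :
    IsSerreSubcategory (⋂₀ 𝒮) := by
  refine ⟨fun X Y e hX S hS => (h𝒮 S hS).1 X Y e (hX S hS),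
    fun X hX S hS => (h𝒮 S hS).2.1 X hX, fun C hC => ⟨fun h => ?_, fun h S hS => ?_⟩⟩
  · exact ⟨fun S hS => ((h𝒮 S hS).2.2 C hC |>.1 (h S hS)).1,
      fun S hS => ((h𝒮 S hS).2.2 C hC |>.1 (h S hS)).2⟩
  · exact (h𝒮 S hS).2.2 C hC |>.2 ⟨h.1 S hS, h.2 S hS⟩

end IsSerreSubcategory

lemma isSerreSubcategory_serreGenerated (T : Set 𝒜) :
    IsSerreSubcategory (serreGenerated T) :=
  IsSerreSubcategory.sInter fun _ hS => hS.1

lemma subset_serreGenerated (T : Set 𝒜) : T ⊆ serreGenerated T :=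
  fun _ hX _ hS => hS.2 hX

lemma serreGenerated_subset {T S : Set 𝒜} (hS : IsSerreSubcategory S) (h : T ⊆ S) :
    serreGenerated T ⊆ S :=
  fun _ hX => hX S ⟨hS, h⟩

lemma serreGenerated_mono {T T' : Set 𝒜} (h : T ⊆ T') : serreGenerated T ⊆ serreGenerated T' :=
  serreGenerated_subset (isSerreSubcategory_serreGenerated T')
    (h.trans (subset_serreGenerated T'))

lemma IsSerreSubcategory.subset_serreHimp {B C : Set 𝒜} (hC : IsSerreSubcategory C)
    {G : Set 𝒜} (h : B ∩ C ⊆ G) : C ⊆ serreHimp B G :=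
  fun _ hX _ hYX hYB => h ⟨hYB, hC.mem_of_isSubquotient hYX hX⟩

lemma IsSerreSubcategory.serreHimp {B G : Set 𝒜} (hB : IsSerreSubcategory B)
    (hG : IsSerreSubcategory G) : IsSerreSubcategory (serreHimp B G) := by
  refine ⟨fun X X' e hX Y hY => hX Y (hY.trans (.of_epi e.hom)),
    fun X hX Y hY _ => hG.2.1 Y (hY.isZero hX), fun S hS => ⟨fun hX₂ => ?_, fun hX₁₃ => ?_⟩⟩
  · have := hS.mono_f
    have := hS.epi_g
    exact ⟨fun Y hY => hX₂ Y (hY.trans (.of_mono S.f)),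
      fun Y hY => hX₂ Y (hY.trans (.of_epi S.g))⟩
  · intro Y hY hYB
    obtain ⟨Y₁, ι, _, hY₁, hY₃⟩ := hS.exists_extension_of_isSubquotient hY
    have hext := shortExact_of_mono ι
    have hB₁₃ := (hB.2.2 _ hext).1 hYB
    exact (hG.2.2 _ hext).2 ⟨hX₁₃.1 _ hY₁ hB₁₃.1, hX₁₃.2 _ hY₃ hB₁₃.2⟩

end

/-- Let `𝒜` be an abelian category, `B` a Serre subcategory of `𝒜`, and
`(C i)_{i : I}` a family of Serre subcategories of `𝒜`. Then
`B ∩ ⟨⋃ i, C i⟩ = ⟨⋃ i, B ∩ C i⟩`: the infinite distributive law making the poset of Serre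
subcategories of `𝒜` a frame. -/
theorem statement0 {𝒜 : Type*} [Category 𝒜] [Abelian 𝒜]
    (B : Set 𝒜) (hB : IsSerreSubcategory B)
    {I : Type*} (C : I → Set 𝒜) (hC : ∀ i, IsSerreSubcategory (C i)) :
    B ∩ serreGenerated (⋃ i, C i) = serreGenerated (⋃ i, B ∩ C i) := by
  set G := serreGenerated (⋃ i, B ∩ C i)
  have hG : IsSerreSubcategory G := isSerreSubcategory_serreGenerated _
  refine subset_antisymm ?_ (Set.subset_inter ?_ ?_)
  · have hCG : ⋃ i, C i ⊆ serreHimp B G := Set.iUnion_subset fun i =>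
      (hC i).subset_serreHimp ((Set.subset_iUnion (fun i => B ∩ C i) i).trans
        (subset_serreGenerated _))
    exact (Set.inter_subset_inter_right B
      (serreGenerated_subset (hB.serreHimp hG) hCG)).trans (inter_serreHimp_subset B G)
  · exact serreGenerated_subset hB (Set.iUnion_subset fun i => Set.inter_subset_left)
  · exact serreGenerated_mono (Set.iUnion_mono fun i => Set.inter_subset_right)
end

section
/- Let R be a commutative ring, let M be an R-module, and let Q →f P →g M → 0 be an exact sequence of R-modules (g surjective, range f = ker g) in which P and Q are finitely generated projective R-modules. Let Tr(M) be the cokernel of the dual map f* : Hom_R(P, R) → Hom_R(Q, R) given by precomposition with f, and let π : Hom_R(Q, R) → Tr(M) be the quotient projection. Then for every R-module X the sequence 0 → Hom_R(M, X) → Hom_R(P, X) → Hom_R(Q, X) → Tr(M) ⊗_R X → 0 is exact, where the map Hom_R(M,X) → Hom_R(P,X) is precomposition with g, the map Hom_R(P,X) → Hom_R(Q,X) is precomposition with f, and the map Hom_R(Q, X) → Tr(M) ⊗_R X is the composite of the inverse of the canonical isomorphism Hom_R(Q, R) ⊗_R X ≅ Hom_R(Q, X) (sending φ ⊗ x to q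 ↦ φ(q) • x, an isomorphism because Q is finitely generated projective) with π ⊗ id_X. -/
open TensorProduct

/-!
The first two exactness claims are left exactness of `Hom(-, X)`. For the rest, tensoring the
right exact sequence `Hom(P,R) → Hom(Q,R) → Tr(M) → 0` with `X` gives a right exact sequence,
and the canonical maps `φ ⊗ x ↦ (p ↦ φ p • x)`, bijective for finitely generated projective
modules, identify its first two terms with `Hom(P,X)` and `Hom(Q,X)`; by naturality they turn
`f* ⊗ id_X` into precomposition with `f`.
-/

theorem eq_dualTensorHom_of_tmul_apply {R : Type*} [CommRing R] {Q X : Type*}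
    [AddCommGroup Q] [Module R Q] [AddCommGroup X] [Module R X]
    (e : (Q →ₗ[R] R) ⊗[R] X →ₗ[R] (Q →ₗ[R] X))
    (he : ∀ (φ : Q →ₗ[R] R) (x : X) (q : Q), e (φ ⊗ₜ x) q = φ q • x) :
    e = dualTensorHom R Q X := by
  ext φ x q
  exact he φ x q

theorem exact_lcomp_rTensor_mkQ_range_dualMap {R : Type*} [CommRing R] {P Q X : Type*}
    [AddCommGroup P] [Module R P] [Module.Finite R P] [Module.Projective R P]
    [AddCommGroup Q] [Module R Q] [AddCommGroup X] [Module R X]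
    (f : Q →ₗ[R] P) (e : (Q →ₗ[R] R) ⊗[R] X ≃ₗ[R] (Q →ₗ[R] X))
    (he : e.toLinearMap = dualTensorHom R Q X) :
    Function.Exact (f.lcomp R X)
      ((LinearMap.range f.dualMap).mkQ.rTensor X ∘ₗ e.symm.toLinearMap) := by
  refine Function.Exact.of_ladder_linearEquiv_of_exact
    (e₁ := LinearEquiv.ofBijective _ dualTensorHom_bijective) (e₂ := e)
    (e₃ := LinearEquiv.refl R _) ?_ ?_
    (rTensor_exact X (LinearMap.exact_map_mkQ_range _) (Submodule.mkQ_surjective _))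
  · rw [he]
    exact (dualTensorHom_comp_rTensor_dualMap f).symm
  · ext t
    simp

theorem statement1_general (R : Type*) [CommRing R]
    (M P Q : Type*) [AddCommGroup M] [Module R M]
    [AddCommGroup P] [Module R P] [Module.Finite R P] [Module.Projective R P]
    [AddCommGroup Q] [Module R Q]
    (f : Q →ₗ[R] P) (g : P →ₗ[R] M)
    (hg : Function.Surjective g) (hfg : Function.Exact f g)
    (X : Type*) [AddCommGroup X] [Module R X]
    (e : ((Q →ₗ[R] R) ⊗[R] X) ≃ₗ[R] (Q →ₗ[R] X))
    (he : ∀ (φ : Q →ₗ[R] R) (x : X) (q : Q), e (φ ⊗ₜ x) q = φ q • x) :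
    Function.Injective (LinearMap.lcomp R X g) ∧
    Function.Exact (LinearMap.lcomp R X g) (LinearMap.lcomp R X f) ∧
    Function.Exact (LinearMap.lcomp R X f)
      ((LinearMap.rTensor X
          (LinearMap.range (LinearMap.lcomp R R f)).mkQ).comp e.symm.toLinearMap) ∧
    Function.Surjective
      ((LinearMap.rTensor X
          (LinearMap.range (LinearMap.lcomp R R f)).mkQ).comp e.symm.toLinearMap) :=
  ⟨LinearMap.lcomp_injective_of_surjective g hg,
    LinearMap.exact_lcomp_of_exact_of_surjective X hfg hg,
    exact_lcomp_rTensor_mkQ_range_dualMap f e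
      (eq_dualTensorHom_of_tmul_apply e.toLinearMap he),
    (LinearMap.rTensor_surjective X (Submodule.mkQ_surjective _)).comp e.symm.surjective⟩

theorem statement1 (R : Type*) [CommRing R]
    (M P Q : Type*) [AddCommGroup M] [Module R M]
    [AddCommGroup P] [Module R P] [Module.Finite R P] [Module.Projective R P]
    [AddCommGroup Q] [Module R Q] [Module.Finite R Q] [Module.Projective R Q]
    (f : Q →ₗ[R] P) (g : P →ₗ[R] M)
    (hg : Function.Surjective g) (hfg : Function.Exact f g)
    (X : Type*) [AddCommGroup X] [Module R X]
    (e : ((Q →ₗ[R] R) ⊗[R] X) ≃ₗ[R] (Q →ₗ[R] X))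
    (he : ∀ (φ : Q →ₗ[R] R) (x : X) (q : Q), e (φ ⊗ₜ x) q = φ q • x) :
    Function.Injective (LinearMap.lcomp R X g) ∧
    Function.Exact (LinearMap.lcomp R X g) (LinearMap.lcomp R X f) ∧
    Function.Exact (LinearMap.lcomp R X f)
      ((LinearMap.rTensor X
          (LinearMap.range (LinearMap.lcomp R R f)).mkQ).comp e.symm.toLinearMap) ∧
    Function.Surjective
      ((LinearMap.rTensor X
          (LinearMap.range (LinearMap.lcomp R R f)).mkQ).comp e.symm.toLinearMap) :=
  statement1_general R M P Q f g hg hfg X e he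
end

section
/- Let R be a ring and let FP(R) be the category of finitely presented additive functors on finitely presented left R-modules. An object G of FP(R) is a projective object of the category FP(R) if and only if there exists a finitely presented left R-module M such that G is isomorphic in FP(R) to the representable functor Hom_R(M, −). -/
open CategoryTheory CategoryTheory.Limits

universe u

variable (R : Type u) [Ring R]

/-- The category `fpMod(R)` of finitely presented left `R`-modules, realized as the full
subcategory of `ModuleCat R` spanned by the finitely presented modules. -/
abbrev FPModuleCat := ObjectProperty.FullSubcategory (fun M : ModuleCat.{u} R => Module.FinitePresentation R M)

/-- The covariant hom functor `Hom_R(A, −) : fpMod(R) ⥤ Ab`. -/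
@[simps]
def homFunctor (A : ModuleCat.{u} R) : FPModuleCat R ⥤ AddCommGrpCat.{u} where
  obj M := AddCommGrpCat.of (A →ₗ[R] M.obj)
  map {M N} φ := AddCommGrpCat.ofHom
    { toFun := fun g => LinearMap.comp φ.hom.hom g
      map_zero' := LinearMap.comp_zero _
      map_add' := fun g₁ g₂ => LinearMap.comp_add g₁ g₂ _ }
  map_id M := by ext; rfl
  map_comp φ ψ := by ext; rfl

/-- The natural transformation `Hom_R(B, −) ⟶ Hom_R(A, −)` given by precomposition with an
`R`-linear map `α : A → B`. -/
@[simps]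
def homNatTrans {A B : ModuleCat.{u} R} (α : A →ₗ[R] B) :
    homFunctor R B ⟶ homFunctor R A where
  app M := AddCommGrpCat.ofHom
    { toFun := fun g => LinearMap.comp g α
      map_zero' := LinearMap.zero_comp α
      map_add' := fun g₁ g₂ => LinearMap.add_comp α g₂ g₁ }
  naturality M N φ := by ext; rfl

/-- A functor `fpMod(R) ⥤ Ab` is finitely presented if it is isomorphic to the cokernel
(computed in the functor category, i.e. pointwise) of a natural transformation
`Hom_R(B, −) ⟶ Hom_R(A, −)` coming from an `R`-linear map `α : A → B` between finitely
presented modules. -/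
def IsFPFunctor (G : FPModuleCat R ⥤ AddCommGrpCat.{u}) : Prop :=
  ∃ (A B : FPModuleCat R) (α : A.obj →ₗ[R] B.obj),
    Nonempty (G ≅ cokernel (homNatTrans R α))

/-- The category `FP(R)` of finitely presented functors on finitely presented left
`R`-modules. -/
abbrev FPFunctorCat := ObjectProperty.FullSubcategory (IsFPFunctor R)

/-!
Epimorphisms of `FP(R)` are epimorphisms of functors: an `FP(R)`-epimorphism `e` is tested against
the cokernel of `q ≫ e` for a cover `q : Hom(A, −) ⟶ E`, and that cokernel is again finitely
presented. Hence `Hom(M, −)` is projective by the Yoneda lemma. Conversely a projective `G` is a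
retract of a representable cover `Hom(A, −)`; by Yoneda the resulting idempotent is `Hom(ε, −)` for
an idempotent `ε` of `A`, so `G ≅ Hom(range ε, −)`, and `range ε` is finitely presented as a direct
summand of `A`.
-/

section

variable {C : Type*} [Category C]

def CategoryTheory.Retract.isoOfIdempotentEq {X X' Y : C} (h : Retract X Y) (h' : Retract X' Y)
    (hri : h.r ≫ h.i = h'.r ≫ h'.i) : X ≅ X' where
  hom := h.i ≫ h'.r
  inv := h'.i ≫ h.r
  hom_inv_id := by
    rw [Category.assoc, ← Category.assoc h'.r, ← hri, Category.assoc, h.retract_assoc, h.retract]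
  inv_hom_id := by
    rw [Category.assoc, ← Category.assoc h.r, hri, Category.assoc, h'.retract_assoc, h'.retract]

/-- The hypotheses say that `c` and the pair `(a, b)` have the same image. -/
noncomputable def isColimitCokernelCompCokernelπ [Preadditive C] {Q H Q' P : C}
    {a : Q ⟶ P} {b : H ⟶ P} {c : Q' ⟶ P} [HasCokernel a] [HasCokernel (b ≫ cokernel.π a)]
    (u : Q ⟶ Q') (v : H ⟶ Q') (p : Q' ⟶ Q) (r : Q' ⟶ H)
    (hu : u ≫ c = a) (hv : v ≫ c = b) (hc : p ≫ a + r ≫ b = c) :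
    IsColimit (CokernelCofork.ofπ (f := c) (cokernel.π a ≫ cokernel.π (b ≫ cokernel.π a)) (by
        rw [← hc, Preadditive.add_comp, Category.assoc, Category.assoc, cokernel.condition_assoc,
          ← Category.assoc b, cokernel.condition, zero_comp, comp_zero, comp_zero, add_zero])) :=
  CokernelCofork.IsColimit.ofπ _ _
    (fun k hk => cokernel.desc _ (cokernel.desc a k (by rw [← hu, Category.assoc, hk, comp_zero]))
      (by rw [Category.assoc, cokernel.π_desc, ← hv, Category.assoc, hk, comp_zero]))
    (fun k hk => by simp)
    (fun k hk m hm => by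
      apply coequalizer.hom_ext; apply coequalizer.hom_ext
      simpa using hm)

end

theorem Module.FinitePresentation.range_of_isIdempotentElem {R M : Type*} [Ring R] [AddCommGroup M]
    [Module R M] [Module.FinitePresentation R M] {ε : M →ₗ[R] M} (hε : IsIdempotentElem ε) :
    Module.FinitePresentation R (LinearMap.range ε) := by
  refine Module.finitePresentation_of_surjective ε.rangeRestrict ε.surjective_rangeRestrict ?_
  rw [LinearMap.ker_rangeRestrict, LinearMap.IsIdempotentElem.ker_eq_range_one_sub hε]
  exact Submodule.fg_range _

theorem LinearMap.IsIdempotentElem.rangeRestrict_comp_subtype {R M : Type*} [Semiring R]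
    [AddCommMonoid M] [Module R M] {ε : M →ₗ[R] M} (hε : IsIdempotentElem ε) :
    ε.rangeRestrict ∘ₗ (LinearMap.range ε).subtype = LinearMap.id := by
  ext ⟨x, hx⟩
  exact (LinearMap.IsIdempotentElem.mem_range_iff hε).mp hx

section

variable {R}

theorem homNatTrans_comp {A B C : ModuleCat.{u} R} (α : A →ₗ[R] B) (β : C →ₗ[R] A) :
    homNatTrans R α ≫ homNatTrans R β = homNatTrans R (α ∘ₗ β) := rfl

theorem homNatTrans_zero (A B : ModuleCat.{u} R) : homNatTrans R (0 : A →ₗ[R] B) = 0 := by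
  ext X g
  exact LinearMap.comp_zero _

theorem homNatTrans_add {A B : ModuleCat.{u} R} (α β : A →ₗ[R] B) :
    homNatTrans R (α + β) = homNatTrans R α + homNatTrans R β := by
  ext X g
  exact LinearMap.comp_add _ _ _


theorem homFunctor_natTrans_app {A : FPModuleCat R} {F : FPModuleCat R ⥤ AddCommGrpCat.{u}}
    (η : homFunctor R A.obj ⟶ F) {X : FPModuleCat R} (g : A.obj →ₗ[R] X.obj) :
    η.app X g = F.map (ObjectProperty.homMk (ModuleCat.ofHom g)) (η.app A LinearMap.id) :=
  ConcreteCategory.congr_hom (η.naturality (ObjectProperty.homMk (ModuleCat.ofHom g)))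
    (LinearMap.id : A.obj →ₗ[R] A.obj)

theorem homFunctor_natTrans_ext {A : FPModuleCat R} {F : FPModuleCat R ⥤ AddCommGrpCat.{u}}
    {η θ : homFunctor R A.obj ⟶ F} (h : η.app A LinearMap.id = θ.app A LinearMap.id) : η = θ := by
  ext X g
  rw [homFunctor_natTrans_app η g, homFunctor_natTrans_app θ g, h]

theorem homNatTrans_app_id {A B : FPModuleCat R} (α : A.obj →ₗ[R] B.obj) :
    (homNatTrans R α).app B LinearMap.id = α := rfl

theorem eq_homNatTrans {A B : FPModuleCat R} (η : homFunctor R B.obj ⟶ homFunctor R A.obj) :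
    η = homNatTrans R (η.app B LinearMap.id) :=
  homFunctor_natTrans_ext rfl

theorem homNatTrans_injective {A B : FPModuleCat R} :
    Function.Injective (homNatTrans R : (A.obj →ₗ[R] B.obj) → _) := fun α β h => by
  rw [← homNatTrans_app_id α, ← homNatTrans_app_id β, h]

theorem exists_homNatTrans_comp_eq {A M : FPModuleCat R} {F : FPModuleCat R ⥤ AddCommGrpCat.{u}}
    (q : homFunctor R A.obj ⟶ F) [Epi q] (f : homFunctor R M.obj ⟶ F) :
    ∃ x : A.obj →ₗ[R] M.obj, homNatTrans R x ≫ q = f := by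
  obtain ⟨x, hx⟩ := (AddCommGrpCat.epi_iff_surjective (q.app M)).mp inferInstance
    (f.app M LinearMap.id)
  exact ⟨x, homFunctor_natTrans_ext hx⟩


theorem isFPFunctor_homFunctor (M : FPModuleCat R) : IsFPFunctor R (homFunctor R M.obj) :=
  ⟨M, M, 0, ⟨(cokernelIsoOfEq (homNatTrans_zero M.obj M.obj) ≪≫ cokernelZeroIsoTarget).symm⟩⟩

abbrev FPFunctorCat.representable (M : FPModuleCat R) : FPFunctorCat R :=
  ⟨homFunctor R M.obj, isFPFunctor_homFunctor M⟩

theorem IsFPFunctor.exists_epi {G : FPModuleCat R ⥤ AddCommGrpCat.{u}} (hG : IsFPFunctor R G) :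
    ∃ (A : FPModuleCat R) (q : homFunctor R A.obj ⟶ G), Epi q := by
  obtain ⟨A, B, α, ⟨e⟩⟩ := hG
  exact ⟨A, cokernel.π (homNatTrans R α) ≫ e.inv, epi_comp _ _⟩

/-- Writing `Y` as the cokernel of `Hom(α, −)` and lifting `h` to `Hom(β, −)`, the cokernel of `h`
is presented by `(α, β) : A' → B' × A`. -/
theorem IsFPFunctor.cokernel {A : FPModuleCat R} {Y : FPModuleCat R ⥤ AddCommGrpCat.{u}}
    (hY : IsFPFunctor R Y) (h : homFunctor R A.obj ⟶ Y) : IsFPFunctor R (cokernel h) := by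
  obtain ⟨A', B', α, ⟨e⟩⟩ := hY
  obtain ⟨β, hβ⟩ := exists_homNatTrans_comp_eq (cokernel.π (homNatTrans R α)) (h ≫ e.hom)
  have := B'.property
  have := A.property
  let P : FPModuleCat R := ⟨ModuleCat.of R (B'.obj × A.obj), inferInstance⟩
  let γ : A'.obj →ₗ[R] P.obj := α.prod β
  have hγ : LinearMap.inl R B'.obj A.obj ∘ₗ α + LinearMap.inr R B'.obj A.obj ∘ₗ β = α.prod β := by
    ext x <;> simp
  have hc : homNatTrans R (LinearMap.inl R B'.obj A.obj) ≫ homNatTrans R α +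
      homNatTrans R (LinearMap.inr R B'.obj A.obj) ≫ homNatTrans R β = homNatTrans R γ := by
    rw [homNatTrans_comp, homNatTrans_comp, ← homNatTrans_add, hγ]
  have hu : homNatTrans R (LinearMap.fst R B'.obj A.obj) ≫ homNatTrans R γ = homNatTrans R α :=
    rfl
  have hv : homNatTrans R (LinearMap.snd R B'.obj A.obj) ≫ homNatTrans R γ = homNatTrans R β :=
    rfl
  refine ⟨A', P, γ, ⟨(cokernelCompIsIso h e.hom).symm ≪≫ cokernelIsoOfEq hβ.symm ≪≫ ?_⟩⟩
  exact IsColimit.coconePointUniqueUpToIso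
    (isColimitCokernelCompCokernelπ _ _ _ _ hu hv hc)
    (colimit.isColimit _)

end

namespace FPFunctorCat

variable {R}

theorem epi_hom_of_epi {E X : FPFunctorCat R} (e : E ⟶ X) [Epi e] : Epi e.hom := by
  obtain ⟨A, q, _⟩ := E.property.exists_epi
  let C : FPFunctorCat R := ⟨cokernel (q ≫ e.hom), X.property.cokernel _⟩
  have hπ : (ObjectProperty.homMk (cokernel.π (q ≫ e.hom)) : X ⟶ C) = 0 := by
    rw [← cancel_epi e, comp_zero]
    ext1
    rw [← cancel_epi q]
    change q ≫ e.hom ≫ cokernel.π (q ≫ e.hom) = q ≫ 0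
    rw [comp_zero, ← Category.assoc, cokernel.condition]
  have : Epi (q ≫ e.hom) :=
    Abelian.epi_of_cokernel_π_eq_zero _ (congrArg InducedCategory.Hom.hom hπ)
  exact epi_of_epi q e.hom

instance projective_representable (M : FPModuleCat R) : Projective (representable M) where
  factors {E X} f e _ := by
    obtain ⟨A, q, _⟩ := E.property.exists_epi
    have := epi_hom_of_epi e
    obtain ⟨x, hx⟩ := exists_homNatTrans_comp_eq (q ≫ e.hom) f.hom
    exact ⟨ObjectProperty.homMk (homNatTrans R x ≫ q), by ext1; simpa using hx⟩

theorem exists_iso_homFunctor_of_projective (G : FPFunctorCat R) [Projective G] :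
    ∃ M : FPModuleCat R, Nonempty (G.obj ≅ homFunctor R M.obj) := by
  obtain ⟨A, q, _⟩ := G.property.exists_epi
  let q' : representable A ⟶ G := ObjectProperty.homMk q
  have : Epi q' := (ObjectProperty.ι (IsFPFunctor R)).epi_of_epi_map ‹Epi q›
  let hG : Retract G.obj (homFunctor R A.obj) :=
    { i := (Projective.factorThru (𝟙 G) q').hom
      r := q
      retract := congrArg InducedCategory.Hom.hom (Projective.factorThru_comp (𝟙 G) q') }
  let ε : Module.End R A.obj := (hG.r ≫ hG.i).app A LinearMap.id
  have hφ : hG.r ≫ hG.i = homNatTrans R ε := eq_homNatTrans _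
  have hε : IsIdempotentElem ε := homNatTrans_injective <| by
    rw [Module.End.mul_eq_comp, ← homNatTrans_comp, ← hφ, Category.assoc, hG.retract_assoc]
  have := A.property
  let N : FPModuleCat R :=
    ⟨ModuleCat.of R (LinearMap.range ε), Module.FinitePresentation.range_of_isIdempotentElem hε⟩
  let hN : Retract (homFunctor R N.obj) (homFunctor R A.obj) :=
    { i := homNatTrans R ε.rangeRestrict
      r := homNatTrans R (LinearMap.range ε).subtype
      retract := by
        rw [homNatTrans_comp, LinearMap.IsIdempotentElem.rangeRestrict_comp_subtype hε]
        rfl }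
  exact ⟨N, ⟨hG.isoOfIdempotentEq hN hφ⟩⟩

end FPFunctorCat

/-- An object `G` of `FP(R)` is projective if and only if it is isomorphic to a
representable functor `Hom_R(M, −)` for some finitely presented left `R`-module `M`. -/
theorem statement2 (G : FPFunctorCat R) :
    Projective G ↔ ∃ M : FPModuleCat R, Nonempty (G.obj ≅ homFunctor R M.obj) := by
  refine ⟨fun _ => G.exists_iso_homFunctor_of_projective, ?_⟩
  rintro ⟨M, ⟨e⟩⟩
  exact Projective.of_iso (ObjectProperty.isoMk _ e : G ≅ FPFunctorCat.representable M).symm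
    inferInstance
end

section
/- Let R be a commutative Noetherian ring, let p ⊆ R be a prime ideal, and let E be an R-module such that: (i) E is an injective R-module, and (ii) there is an injective R-linear map ι : R/p → E whose range is essential in E, i.e., for every x ∈ E with x ≠ 0 there exists r ∈ R with r • x ≠ 0 and r • x ∈ range ι (so E is an injective hull of R/p). Let α : A → B be an R-linear map between finitely generated R-modules. Then the precomposition map Hom_R(B, E) → Hom_R(A, E), f ↦ f ∘ α, is surjective if and only if the localization of ker α at p is zero, i.e., LocalizedModule p.primeCompl (ker α) is trivial. (This expresses that a finitely presented functor 𝒢 with presentation given by α satisfies 𝒢(E(R/p)) ≅ 0 if and only if R_p ⊗_R Defect(𝒢) ≅ 0, where Defect(𝒢) = ker α.) -/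
/-!
Every element of the injective hull `E` of `R ⧸ p` is killed by a power of `p`, while elements
outside `p` act injectively on `E`. The second fact alone gives that a map `A → E` kills `ker α`
as soon as `(ker α)_p = 0`, so it extends along `α` by injectivity. Conversely, if some `m ∈ ker α`
has annihilator inside `p`, then `R m → R ⧸ p ⊆ E` extends to a map `A → E` not vanishing at
`m`, which cannot factor through `α`.

The extensions are taken in arbitrary universes, whereas `Module.Injective` only speaks about
modules in the universe of `E`, so we go through Baer's criterion. By Artin–Rees and the first
fact, a map from an ideal `I` to `E` factors through `I ⧸ (I ⊓ p ^ n) ⊆ R ⧸ p ^ n`, and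
`R ⧸ p ^ n`, being filtered by finitely generated `R ⧸ p`-modules, is small relative to `E`.
-/

universe u v

theorem small_of_small_submodule_of_small_quotient {R : Type u} [Ring R] {M : Type*}
    [AddCommGroup M] [Module R M] (S : Submodule R M) [Small.{v} S] [Small.{v} (M ⧸ S)] :
    Small.{v} M := by
  refine small_of_surjective (f := fun x : S × (M ⧸ S) => (x.1 : M) + Quotient.out x.2)
    fun m => ⟨(⟨m - Quotient.out (S.mkQ m), ?_⟩, S.mkQ m), sub_add_cancel _ _⟩
  rw [← Submodule.Quotient.eq, Submodule.mkQ_apply, Submodule.Quotient.mk_out]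

section Smallness

variable {R : Type u} [CommRing R] {M : Type*} [AddCommGroup M] [Module R M]

theorem Submodule.smul_top_quotient_eq_bot_iff (I : Ideal R) (N : Submodule R M) :
    I • (⊤ : Submodule R (M ⧸ N)) = ⊥ ↔ I • ⊤ ≤ N := by
  rw [← N.range_mkQ, LinearMap.range_eq_map, ← Submodule.map_smul'', ← LinearMap.le_ker_iff_map,
    Submodule.ker_mkQ]

theorem small_of_smul_top_eq_bot (I : Ideal R) [Small.{v} (R ⧸ I)] [Module.Finite R M]
    (hM : I • (⊤ : Submodule R M) = ⊥) : Small.{v} M := by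
  obtain ⟨n, s, hs⟩ := Module.Finite.exists_fin (R := R) (M := M)
  refine small_of_surjective (f := fun c : Fin n → R ⧸ I => ∑ i, Quotient.out (c i) • s i)
    fun m => ?_
  have hm : m ∈ Submodule.span R (Set.range s) := hs ▸ Submodule.mem_top
  obtain ⟨c, rfl⟩ := (Submodule.mem_span_range_iff_exists_fun R).mp hm
  refine ⟨fun i => Ideal.Quotient.mk I (c i), Finset.sum_congr rfl fun i _ => ?_⟩
  have hout : Quotient.out (Ideal.Quotient.mk I (c i)) - c i ∈ I :=
    Ideal.Quotient.eq.mp (Quotient.out_eq _)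
  rw [← sub_eq_zero, ← sub_smul, ← Submodule.mem_bot R, ← hM]
  exact Submodule.smul_mem_smul hout Submodule.mem_top

theorem small_of_pow_smul_top_eq_bot [IsNoetherianRing R] (I : Ideal R) [Small.{v} (R ⧸ I)]
    (n : ℕ) [Module.Finite R M] (hM : I ^ n • (⊤ : Submodule R M) = ⊥) : Small.{v} M := by
  induction n generalizing M with
  | zero =>
    rw [pow_zero, Ideal.one_eq_top, Submodule.top_smul, eq_comm] at hM
    have := (Submodule.subsingleton_iff R).mp (subsingleton_iff_bot_eq_top.mp hM)
    infer_instance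
  | succ n ih =>
    let S : Submodule R M := I • ⊤
    have hS : I ^ n • (⊤ : Submodule R S) = ⊥ := by
      apply Submodule.map_injective_of_injective S.injective_subtype
      rw [Submodule.map_smul'', Submodule.map_subtype_top, Submodule.map_bot, ← Submodule.mul_smul,
        ← pow_succ, hM]
    have : Small.{v} S := ih hS
    have : Small.{v} (M ⧸ S) :=
      small_of_smul_top_eq_bot I ((Submodule.smul_top_quotient_eq_bot_iff I S).mpr le_rfl)
    exact small_of_small_submodule_of_small_quotient S

end Smallness

section Extension

variable {R : Type u} [Ring R] {E : Type v} [AddCommGroup E] [Module R E]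
  {X Y : Type*} [AddCommGroup X] [Module R X] [AddCommGroup Y] [Module R Y]

open LinearMap in
theorem Module.Injective.exists_comp_eq_of_ker_le (hE : Module.Injective R E) [Small.{v} Y]
    (f : X →ₗ[R] Y) (g : X →ₗ[R] E) (hfg : ker f ≤ ker g) : ∃ h : Y →ₗ[R] E, h ∘ₗ f = g := by
  have hinj : Function.Injective ((ker f).liftQ f le_rfl) :=
    ker_eq_bot.mp ((ker f).ker_liftQ_eq_bot' f rfl)
  have : Small.{v} (X ⧸ ker f) := small_of_injective hinj
  let eQ := Shrink.linearEquiv R (X ⧸ ker f)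
  let eY := Shrink.linearEquiv R Y
  obtain ⟨h, hh⟩ := hE.out (eY.symm.toLinearMap ∘ₗ (ker f).liftQ f le_rfl ∘ₗ eQ.toLinearMap)
    (eY.symm.injective.comp (hinj.comp eQ.injective)) ((ker f).liftQ g hfg ∘ₗ eQ.toLinearMap)
  refine ⟨h ∘ₗ eY.symm.toLinearMap, LinearMap.ext fun x => ?_⟩
  simpa [eQ] using hh (eQ.symm (Submodule.Quotient.mk x))

open LinearMap in
theorem Module.Baer.exists_comp_eq_of_ker_le (hE : Module.Baer R E)
    (f : X →ₗ[R] Y) (g : X →ₗ[R] E) (hfg : ker f ≤ ker g) : ∃ h : Y →ₗ[R] E, h ∘ₗ f = g := by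
  obtain ⟨h, hh⟩ := hE.extension_property ((ker f).liftQ f le_rfl)
    (ker_eq_bot.mp ((ker f).ker_liftQ_eq_bot' f rfl)) ((ker f).liftQ g hfg)
  exact ⟨h, LinearMap.ext fun x => congr($hh (Submodule.Quotient.mk x))⟩

end Extension

section Essential

variable {R : Type u} [CommRing R] {p : Ideal R} {E : Type v} [AddCommGroup E] [Module R E]
  {ι : (R ⧸ p) →ₗ[R] E}

theorem smul_eq_zero_of_mem_range {a : R} (ha : a ∈ p) {x : E} (hx : x ∈ LinearMap.range ι) :
    a • x = 0 := by
  obtain ⟨y, rfl⟩ := hx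
  rw [← map_smul, Algebra.smul_def, Ideal.Quotient.algebraMap_eq,
    Ideal.Quotient.eq_zero_iff_mem.mpr ha, zero_mul, map_zero]

theorem eq_zero_of_smul_eq_zero_of_notMem [p.IsPrime] (hι : Function.Injective ι)
    (hess : ∀ x : E, x ≠ 0 → ∃ r : R, r • x ≠ 0 ∧ r • x ∈ LinearMap.range ι)
    {s : R} (hs : s ∉ p) {e : E} (he : s • e = 0) : e = 0 := by
  by_contra hne
  obtain ⟨r, hr, y, hy⟩ := hess e hne
  have hsy : s • y = 0 := hι (by rw [map_smul, hy, smul_comm, he, smul_zero, map_zero])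
  rw [Algebra.smul_def, Ideal.Quotient.algebraMap_eq, mul_eq_zero,
    Ideal.Quotient.eq_zero_iff_mem] at hsy
  exact hr (by rw [← hy, hsy.resolve_left hs, map_zero])

theorem exists_pow_smul_eq_zero_of_mem [IsNoetherianRing R]
    (hess : ∀ x : E, x ≠ 0 → ∃ r : R, r • x ≠ 0 ∧ r • x ∈ LinearMap.range ι)
    {a : R} (ha : a ∈ p) (e : E) : ∃ n : ℕ, a ^ n • e = 0 := by
  let ann : ℕ →o Ideal R :=
    ⟨fun n => (R ∙ (a ^ n • e)).annihilator, monotone_nat_of_le_succ fun n r hr => by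
      rw [Submodule.mem_annihilator_span_singleton] at hr ⊢
      rw [pow_succ', mul_smul, smul_comm, hr, smul_zero]⟩
  obtain ⟨n, hn⟩ := monotone_stabilizes_iff_noetherian.mpr inferInstance ann
  refine ⟨n, by_contra fun hne => ?_⟩
  obtain ⟨r, hr, hrange⟩ := hess _ hne
  have hr' : r ∈ ann (n + 1) := (Submodule.mem_annihilator_span_singleton _ _).mpr <| by
    rw [pow_succ', mul_smul, smul_comm]
    exact smul_eq_zero_of_mem_range ha hrange
  rw [← hn (n + 1) n.le_succ] at hr'
  exact hr ((Submodule.mem_annihilator_span_singleton _ _).mp hr')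

theorem le_radical_annihilator_of_fg [IsNoetherianRing R]
    (hess : ∀ x : E, x ≠ 0 → ∃ r : R, r • x ≠ 0 ∧ r • x ∈ LinearMap.range ι)
    (N : Submodule R E) (hN : N.FG) : p ≤ N.annihilator.radical := by
  induction N, hN using Submodule.fg_induction with
  | singleton e =>
    intro a ha
    obtain ⟨n, hn⟩ := exists_pow_smul_eq_zero_of_mem hess ha e
    exact ⟨n, (Submodule.mem_annihilator_span_singleton e _).mpr hn⟩
  | sup N₁ N₂ _ _ h₁ h₂ =>
    rw [Submodule.annihilator_sup, Ideal.radical_inf]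
    exact le_inf h₁ h₂

theorem Module.Baer.of_injective_of_essential [IsNoetherianRing R] (hE : Module.Injective R E)
    (hι : Function.Injective ι)
    (hess : ∀ x : E, x ≠ 0 → ∃ r : R, r • x ≠ 0 ∧ r • x ∈ LinearMap.range ι) :
    Module.Baer R E := by
  have : Small.{v} (R ⧸ p) := small_of_injective hι
  intro I g
  obtain ⟨k, hk⟩ := Ideal.exists_pow_le_of_le_radical_of_fg
    (le_radical_annihilator_of_fg hess (LinearMap.range g) (Module.Finite.iff_fg.mp inferInstance))
    (IsNoetherian.noetherian p)
  obtain ⟨c, hc⟩ := Ideal.exists_pow_inf_eq_pow_smul p I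
  let J : Ideal R := p ^ (k + c)
  have : Small.{v} (R ⧸ J) := small_of_pow_smul_top_eq_bot p (k + c) <| by
    rw [Submodule.smul_top_quotient_eq_bot_iff, smul_eq_mul, Ideal.mul_top]
  have hgk : p ^ k • (⊤ : Submodule R I) ≤ LinearMap.ker g := by
    rw [LinearMap.le_ker_iff_map, Submodule.map_smul'', ← LinearMap.range_eq_map]
    exact Submodule.le_annihilator_iff.mp hk
  have hAR : J ⊓ I ≤ (p ^ k • ⊤ : Submodule R I).map I.subtype :=
    calc J ⊓ I = p ^ (k + c) • ⊤ ⊓ I := by rw [smul_eq_mul, Ideal.mul_top]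
      _ = p ^ k • (p ^ c • ⊤ ⊓ I) := by rw [hc (k + c) (Nat.le_add_left c k), Nat.add_sub_cancel]
      _ ≤ p ^ k • I := Submodule.smul_mono le_rfl inf_le_right
      _ = (p ^ k • ⊤ : Submodule R I).map I.subtype := by
        rw [Submodule.map_smul'', Submodule.map_subtype_top]
  have hker : LinearMap.ker (J.mkQ ∘ₗ I.subtype) ≤ LinearMap.ker g := by
    intro x hx
    obtain ⟨y, hy, hyx⟩ := hAR ⟨by simpa [Ideal.Quotient.eq_zero_iff_mem] using hx, x.2⟩
    exact hgk (Subtype.ext hyx ▸ hy)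
  obtain ⟨h, hh⟩ := hE.exists_comp_eq_of_ker_le _ g hker
  exact ⟨h ∘ₗ J.mkQ, fun x hx => congr($hh ⟨x, hx⟩)⟩

end Essential

section Defect

variable {R : Type u} [CommRing R] {p : Ideal R} {E : Type v} [AddCommGroup E] [Module R E]
  {ι : (R ⧸ p) →ₗ[R] E} {A B : Type*} [AddCommGroup A] [Module R A] [AddCommGroup B] [Module R B]

theorem exists_apply_ne_zero_of_ker_toSpanSingleton_le (hp : p ≠ ⊤) (hE : Module.Baer R E)
    (hι : Function.Injective ι) {m : A} (hm : LinearMap.ker (LinearMap.toSpanSingleton R A m) ≤ p) :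
    ∃ g : A →ₗ[R] E, g m ≠ 0 := by
  obtain ⟨g, hg⟩ := hE.exists_comp_eq_of_ker_le (LinearMap.toSpanSingleton R A m) (ι ∘ₗ p.mkQ)
    (hm.trans (p.ker_mkQ.symm.trans_le (LinearMap.ker_le_ker_comp _ _)))
  have := Ideal.Quotient.nontrivial_iff.mpr hp
  refine ⟨g, fun h => one_ne_zero (α := R ⧸ p) (hι ?_)⟩
  simpa [h] using congr($hg 1).symm

theorem surjective_comp_of_forall_mem_ker_exists_smul_eq_zero [p.IsPrime] (hE : Module.Baer R E)
    (hι : Function.Injective ι)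
    (hess : ∀ x : E, x ≠ 0 → ∃ r : R, r • x ≠ 0 ∧ r • x ∈ LinearMap.range ι) (α : A →ₗ[R] B)
    (hα : ∀ m ∈ LinearMap.ker α, ∃ r ∉ p, r • m = 0) :
    Function.Surjective (fun f : B →ₗ[R] E => f ∘ₗ α) := fun g => by
  refine hE.exists_comp_eq_of_ker_le α g fun m hm => ?_
  obtain ⟨r, hr, hrm⟩ := hα m hm
  exact eq_zero_of_smul_eq_zero_of_notMem hι hess hr (by rw [← map_smul, hrm, map_zero])

end Defect

theorem statement7_general (R : Type*) [CommRing R] [IsNoetherianRing R]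
    (p : Ideal R) (hp : p.IsPrime)
    (E : Type*) [AddCommGroup E] [Module R E]
    (hE : Module.Injective R E)
    (ι : (R ⧸ p) →ₗ[R] E) (hι : Function.Injective ι)
    (hess : ∀ x : E, x ≠ 0 → ∃ r : R, r • x ≠ 0 ∧ r • x ∈ LinearMap.range ι)
    (A B : Type*) [AddCommGroup A] [Module R A] [AddCommGroup B] [Module R B]
    (α : A →ₗ[R] B) :
    Function.Surjective (fun f : B →ₗ[R] E => f.comp α) ↔
      Subsingleton (LocalizedModule p.primeCompl (LinearMap.ker α)) := by
  have hBaer := Module.Baer.of_injective_of_essential hE hι hess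
  rw [LocalizedModule.subsingleton_iff]
  constructor
  · rintro hsurj ⟨m, hm⟩
    by_contra! hkill
    obtain ⟨g, hg⟩ := exists_apply_ne_zero_of_ker_toSpanSingleton_le hp.ne_top hBaer hι (m := m)
      fun r hr => by_contra fun hrp => hkill r hrp (Subtype.ext hr)
    obtain ⟨f, rfl⟩ := hsurj g
    exact hg (by simp [LinearMap.mem_ker.mp hm])
  · intro hloc
    refine surjective_comp_of_forall_mem_ker_exists_smul_eq_zero hBaer hι hess α fun m hm => ?_
    obtain ⟨r, hr, hrm⟩ := hloc ⟨m, hm⟩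
    exact ⟨r, hr, congr(Subtype.val $hrm)⟩

/-- Let `R` be a commutative Noetherian ring, `p` a prime ideal, and `E` an
injective `R`-module containing `R/p` as an essential submodule (so `E` is an injective hull of
`R/p`). Let `α : A → B` be an `R`-linear map between finitely generated `R`-modules. Then the
precomposition map `Hom_R(B, E) → Hom_R(A, E)` is surjective if and only if the localization of
`ker α` at `p` vanishes. -/
theorem statement7 (R : Type*) [CommRing R] [IsNoetherianRing R]
    (p : Ideal R) (hp : p.IsPrime)
    (E : Type*) [AddCommGroup E] [Module R E]
    (hE : Module.Injective R E)
    (ι : (R ⧸ p) →ₗ[R] E) (hι : Function.Injective ι)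
    (hess : ∀ x : E, x ≠ 0 → ∃ r : R, r • x ≠ 0 ∧ r • x ∈ LinearMap.range ι)
    (A B : Type*) [AddCommGroup A] [Module R A] [AddCommGroup B] [Module R B]
    [Module.Finite R A] [Module.Finite R B] (α : A →ₗ[R] B) :
    Function.Surjective (fun f : B →ₗ[R] E => f.comp α) ↔
      Subsingleton (LocalizedModule p.primeCompl (LinearMap.ker α)) :=
  statement7_general R p hp E hE ι hι hess A B α
end

section
/- Let R be a Dedekind domain that is not a field, let p ⊆ R be a nonzero maximal ideal, and let Â_p denote the p-adic completion of R, i.e., the inverse limit of the system (R/p^n)_{n ≥ 1}, regarded as an R-module. Let α : A → B be an R-linear map between finitely generated R-modules, and let C denote the cokernel of the dual map Hom_R(B, R) → Hom_R(A, R) given by precomposition with α. Then the precomposition map Hom_R(B, Â_p) → Hom_R(A, Â_p), f ↦ f ∘ α, is surjective if and only if the localization of C at p is zero, i.e., LocalizedModule p.primeCompl C is trivial. (This expresses that a finitely presented functor 𝒢 with presentation given by α satisfies 𝒢(A_p) ≅ 0 if and only if Covdefect(𝒢) ⊗_R R_p ≅ 0, where A_p is the indecomposable pure-injective given by the completion and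 Covdefect(𝒢) = coker(Hom_R(α, R)).) -/
/-!
Since `Â_p` is flat over the Noetherian ring `R` and `A`, `B` are finitely presented,
`Hom_R(-, Â_p) ≅ Â_p ⊗ Hom_R(-, R)` naturally on `A` and `B`. So precomposition with `α` is
surjective into `Â_p` iff `Â_p ⊗ Hom(α, R)` is surjective, iff `Â_p ⊗ C = 0` by right exactness.
For finite `C` we have `Â_p ⊗ C ≅ Ĉ_p`, which vanishes iff `C = pC`, and by Nakayama (in the form
`Supp(C/pC) = Supp C ∩ V(p)`) this happens iff `p ∉ Supp C`, i.e. `C_p = 0`.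
-/

open TensorProduct LinearMap

section BaseChange

variable (R : Type*) [CommRing R] (S : Type*) [CommRing S] [Algebra R S] [Module.Flat R S]

theorem Module.FinitePresentation.isBaseChange_compRight_algebraLinearMap
    (M : Type*) [AddCommGroup M] [Module R M] [Module.FinitePresentation R M] :
    IsBaseChange S (compRight R (Algebra.linearMap R S) : (M →ₗ[R] R) →ₗ[R] M →ₗ[R] S) := by
  let e : (S ⊗[R] M →ₗ[S] S ⊗[R] R) ≃ₗ[S] (M →ₗ[R] S) :=
    (LinearEquiv.congrRight (AlgebraTensorModule.rid R S S)).trans (liftBaseChangeEquiv S).symm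
  refine (IsBaseChange.iff_of_equiv_comm (LinearEquiv.refl R _) e ?_).mp
    (Module.FinitePresentation.isBaseChange_map R M R S)
  ext f m
  simp [e, LinearEquiv.congrRight, Algebra.algebraMap_eq_smul_one]

theorem LinearMap.surjective_lcomp_iff_surjective_lTensor_lcomp {A B : Type*}
    [AddCommGroup A] [Module R A] [AddCommGroup B] [Module R B]
    [Module.FinitePresentation R A] [Module.FinitePresentation R B] (α : A →ₗ[R] B) :
    Function.Surjective (lcomp R S α) ↔ Function.Surjective (lTensor S (lcomp R R α)) := by
  have hA := Module.FinitePresentation.isBaseChange_compRight_algebraLinearMap R S A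
  have hB := Module.FinitePresentation.isBaseChange_compRight_algebraLinearMap R S B
  have naturality : lcomp R S α ∘ hB.equiv = hA.equiv ∘ lTensor S (lcomp R R α) := by
    funext x
    induction x using TensorProduct.induction_on with
    | zero => simp
    | tmul s f => ext; simp
    | add x y hx hy => simp_all
  rw [← EquivLike.surjective_comp hB.equiv, naturality, EquivLike.comp_surjective]

end BaseChange

theorem LinearMap.lTensor_surjective_iff_subsingleton_tensor_quotient {R : Type*} [CommRing R]
    (Q : Type*) [AddCommGroup Q] [Module R Q] {X Y : Type*} [AddCommGroup X] [Module R X]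
    [AddCommGroup Y] [Module R Y] (f : X →ₗ[R] Y) :
    Function.Surjective (lTensor Q f) ↔ Subsingleton (Q ⊗[R] (Y ⧸ range f)) := by
  have hT : Function.Exact (lTensor Q f) (lTensor Q (range f).mkQ) :=
    lTensor_exact Q (exact_iff.mpr (Submodule.ker_mkQ _)) (Submodule.mkQ_surjective _)
  constructor
  · intro hsurj
    refine (subsingleton_iff_forall_eq 0).mpr fun x => ?_
    obtain ⟨y, rfl⟩ := lTensor_surjective Q (Submodule.mkQ_surjective _) x
    obtain ⟨z, rfl⟩ := hsurj y
    exact hT.apply_apply_eq_zero z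
  · intro _ y
    exact (hT y).mp (Subsingleton.elim _ _)

section Completion

variable {R : Type*} [CommRing R]

theorem AdicCompletion.subsingleton_iff (I : Ideal R) (M : Type*) [AddCommGroup M] [Module R M] :
    Subsingleton (AdicCompletion I M) ↔ I • (⊤ : Submodule R M) = ⊤ := by
  constructor
  · intro _
    have := (eval_surjective I M 1).subsingleton
    rwa [Submodule.Quotient.subsingleton_iff, pow_one] at this
  · intro h
    have hpow (n : ℕ) : I ^ n • (⊤ : Submodule R M) = ⊤ := by
      induction n with
      | zero => simp
      | succ n ih => rw [pow_succ, Submodule.mul_smul, h, ih]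
    refine ⟨fun x y => AdicCompletion.ext fun n => ?_⟩
    have : Subsingleton (M ⧸ (I ^ n • ⊤ : Submodule R M)) :=
      Submodule.Quotient.subsingleton_iff.mpr (hpow n)
    exact Subsingleton.elim _ _

theorem Module.smul_top_eq_top_iff_notMem_support (p : Ideal R) [hp : p.IsMaximal]
    (M : Type*) [AddCommGroup M] [Module R M] [Module.Finite R M] :
    p • (⊤ : Submodule R M) = ⊤ ↔ ⟨p, hp.isPrime⟩ ∉ Module.support R M := by
  rw [← Submodule.Quotient.subsingleton_iff, ← support_eq_empty_iff (R := R), support_quotient,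
    Set.eq_empty_iff_forall_notMem]
  constructor
  · exact fun h hsupp => h _ ⟨hsupp, (PrimeSpectrum.mem_zeroLocus _ _).mpr le_rfl⟩
  · rintro h q ⟨hq, hpq⟩
    have : q = ⟨p, hp.isPrime⟩ := PrimeSpectrum.ext (hp.eq_of_le q.isPrime.ne_top hpq).symm
    exact h (this ▸ hq)

theorem AdicCompletion.subsingleton_tensor_iff_subsingleton_localizedModule [IsNoetherianRing R]
    (p : Ideal R) [hp : p.IsMaximal] (C : Type*) [AddCommGroup C] [Module R C]
    [Module.Finite R C] :
    Subsingleton (AdicCompletion p R ⊗[R] C) ↔ Subsingleton (LocalizedModule p.primeCompl C) := by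
  -- `ofTensorProductEquivOfFiniteNoetherian` needs a module in the universe of `R`.
  obtain ⟨n, π, hπ⟩ := Module.Finite.exists_fin' R C
  let e := π.quotKerEquivOfSurjective hπ
  have : Module.Finite R ((Fin n → R) ⧸ ker π) := Module.Finite.equiv e.symm
  rw [← (TensorProduct.congr (LinearEquiv.refl _ _) e).toEquiv.subsingleton_congr,
    (ofTensorProductEquivOfFiniteNoetherian p _).toEquiv.subsingleton_congr, subsingleton_iff,
    Module.smul_top_eq_top_iff_notMem_support, e.support_eq]
  exact Module.notMem_support_iff

end Completion

theorem statement8_general (R : Type*) [CommRing R] [IsDedekindDomain R]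
    (p : Ideal R) (hp : p.IsMaximal)
    (A B : Type*) [AddCommGroup A] [Module R A] [AddCommGroup B] [Module R B]
    [Module.Finite R A] [Module.Finite R B] (α : A →ₗ[R] B) :
    Function.Surjective
        (fun f : B →ₗ[R] AdicCompletion p R => f.comp α) ↔
      Subsingleton (LocalizedModule p.primeCompl
        ((A →ₗ[R] R) ⧸ LinearMap.range (LinearMap.lcomp R R α))) := by
  have := Module.finitePresentation_of_finite R A
  have := Module.finitePresentation_of_finite R B
  have := AdicCompletion.flat_of_isNoetherian p (R := R)
  exact (surjective_lcomp_iff_surjective_lTensor_lcomp R _ α).trans <|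
    (lTensor_surjective_iff_subsingleton_tensor_quotient _ _).trans
      (AdicCompletion.subsingleton_tensor_iff_subsingleton_localizedModule p _)

/-- Let `R` be a Dedekind domain that is not a field, `p` a nonzero maximal
ideal, and `Â_p = AdicCompletion p R` the `p`-adic completion of `R`, regarded as an `R`-module.
Let `α : A → B` be an `R`-linear map between finitely generated `R`-modules, and let `C` be the
cokernel of the dual map `Hom_R(B, R) → Hom_R(A, R)` (precomposition with `α`). Then the
precomposition map `Hom_R(B, Â_p) → Hom_R(A, Â_p)` is surjective if and only if the localization
of `C` at `p` vanishes. -/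
theorem statement8 (R : Type*) [CommRing R] [IsDedekindDomain R] (hR : ¬IsField R)
    (p : Ideal R) (hp : p.IsMaximal) (hp0 : p ≠ ⊥)
    (A B : Type*) [AddCommGroup A] [Module R A] [AddCommGroup B] [Module R B]
    [Module.Finite R A] [Module.Finite R B] (α : A →ₗ[R] B) :
    Function.Surjective
        (fun f : B →ₗ[R] AdicCompletion p R => f.comp α) ↔
      Subsingleton (LocalizedModule p.primeCompl
        ((A →ₗ[R] R) ⧸ LinearMap.range (LinearMap.lcomp R R α))) :=
  statement8_general R p hp A B α
end

section
/- Let R be a Dedekind domain that is not a field, let p and q be nonzero maximal ideals of R, and let l, n ≥ 1 be natural numbers. Then the length of the R-module Hom_R(R/p^l, R/q^n) equals min(l, n) if p = q, and equals 0 if p ≠ q. -/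
/-!
Evaluation at `1` identifies `Hom_R(R/I, R/J)` with `(J : I)/J`, so
`length (R/J) = length Hom_R(R/I, R/J) + length (R/(J : I))`. In a Dedekind domain
`length (R/q^k) = k` (localise at `q` to get a DVR), and the colon ideal is `q^n : p^l = q^n`
when `p ≠ q` (coprime ideals) and `q^n : q^l = q^(n - l)`, which leaves `n - (n - l) = min l n`.
-/

/-- The length of a module: the supremum of the lengths of (strictly increasing finite) chains
of submodules, valued in `ℕ∞`. -/
noncomputable def Module.lengthLT (R M : Type*) [Ring R] [AddCommGroup M] [Module R M] : ℕ∞ :=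
  ⨆ s : LTSeries (Submodule R M), (s.length : ℕ∞)

theorem Module.lengthLT_eq_length (R M : Type*) [Ring R] [AddCommGroup M] [Module R M] :
    Module.lengthLT R M = Module.length R M := by
  apply WithBot.coe_injective
  rw [Module.coe_length, Order.krullDim_eq_iSup_length]
  rfl

theorem ENat.eq_natCast_sub_of_natCast_eq_add {x : ℕ∞} {k n : ℕ} (h : (n : ℕ∞) = x + k) :
    x = (n - k : ℕ) := by
  induction x using ENat.recTopCoe with
  | top => simp at h
  | coe x =>
    norm_cast at h ⊢
    omega

namespace Ideal

section CommRing

variable {R : Type*} [CommRing R]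

theorem linearMap_quotient_ext {M : Type*} [AddCommGroup M] [Module R M] {I : Ideal R}
    {f g : (R ⧸ I) →ₗ[R] M} (h : f 1 = g 1) : f = g :=
  Submodule.linearMap_qext I (LinearMap.ext_ring h)

theorem exists_linearMap_quotient_apply_one_iff (I J : Ideal R) (r : R) :
    (∃ f : (R ⧸ I) →ₗ[R] (R ⧸ J), f 1 = Quotient.mk J r) ↔ r ∈ J.colon I := by
  rw [Submodule.mem_colon]
  constructor
  · rintro ⟨f, hf⟩ s hs
    have hfs : f (s • 1) = 0 := by
      rw [Algebra.smul_def, mul_one, Quotient.algebraMap_eq, Quotient.eq_zero_iff_mem.mpr hs,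
        map_zero]
    rwa [map_smul, hf, Algebra.smul_def, Quotient.algebraMap_eq, ← map_mul,
      Quotient.eq_zero_iff_mem, mul_comm] at hfs
  · intro hr
    refine ⟨I.liftQ (r • J.mkQ) fun s hs => ?_, ?_⟩
    · rw [LinearMap.mem_ker, LinearMap.smul_apply, ← map_smul, Submodule.mkQ_apply,
        Submodule.Quotient.mk_eq_zero, smul_eq_mul]
      exact hr s hs
    · change (r • J.mkQ) (1 : R) = _
      simp [Algebra.smul_def]

theorem length_quotient_eq_length_linearMap_add (I J : Ideal R) :
    Module.length R (R ⧸ J) =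
      Module.length R ((R ⧸ I) →ₗ[R] (R ⧸ J)) + Module.length R (R ⧸ J.colon I) := by
  refine Module.length_eq_add_of_exact (LinearMap.applyₗ (1 : R ⧸ I))
    (Submodule.factor le_colon) (fun f g h => linearMap_quotient_ext h)
    (Submodule.factor_surjective _) fun y => ?_
  obtain ⟨r, rfl⟩ := Quotient.mk_surjective y
  simp only [Set.mem_range, LinearMap.applyₗ_apply_apply, exists_linearMap_quotient_apply_one_iff]
  exact Submodule.Quotient.mk_eq_zero _

theorem colon_eq_self_of_sup_eq_top {I J : Ideal R} (h : I ⊔ J = ⊤) : J.colon I = J := by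
  refine le_antisymm (fun r hr => ?_) le_colon
  obtain ⟨a, ha, b, hb, hab⟩ := Submodule.mem_sup.mp (h ▸ Submodule.mem_top : (1 : R) ∈ I ⊔ J)
  have hra : r * a ∈ J := Submodule.mem_colon.mp hr a ha
  rw [← mul_one r, ← hab, mul_add]
  exact J.add_mem hra (J.mul_mem_left r hb)

end CommRing

section IsDedekindDomain

variable {R : Type*} [CommRing R] [IsDedekindDomain R]

theorem colon_pow_pow {I : Ideal R} (hI : I ≠ ⊥) (n l : ℕ) :
    (I ^ n).colon (↑(I ^ l) : Set R) = I ^ (n - l) := by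
  rcases le_total n l with hnl | hln
  · rw [Nat.sub_eq_zero_of_le hnl, pow_zero, one_eq_top, Submodule.colon_eq_top_iff_subset]
    exact pow_le_pow_right hnl
  · ext r
    rw [Submodule.mem_colon, ← span_singleton_le_iff_mem, ← dvd_iff_le,
      ← mul_dvd_mul_iff_right (pow_ne_zero l hI), ← pow_add, Nat.sub_add_cancel hln, dvd_iff_le,
      span_singleton_mul_le_iff]
    rfl

open IsLocalRing in
theorem length_quotient_pow {p : Ideal R} (hp0 : p ≠ ⊥) [p.IsMaximal] (n : ℕ) :
    Module.length R (R ⧸ p ^ n) = n := by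
  let Rₚ := Localization.AtPrime p
  have := (IsDedekindDomain.isDedekindDomainDvr R).2 p hp0 inferInstance
  let e := IsLocalization.AtPrime.equivQuotMaximalIdealPow p Rₚ n
  have hsurj : Function.Surjective (algebraMap R (Rₚ ⧸ maximalIdeal Rₚ ^ n)) := by
    intro y
    obtain ⟨x, rfl⟩ := e.surjective y
    obtain ⟨r, rfl⟩ := Quotient.mk_surjective x
    exact ⟨r, by simp⟩
  rw [e.toLinearEquiv.length_eq, Module.length_eq_of_surjective hsurj,
    ← Module.length_eq_of_surjective Quotient.mk_surjective,
    IsDiscreteValuationRing.length_quotient_pow_maximalIdeal]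

end IsDedekindDomain

end Ideal

open Classical in
theorem statement9_general (R : Type*) [CommRing R] [IsDedekindDomain R]
    (p q : Ideal R) (hp : p.IsMaximal) (hq : q.IsMaximal) (hq0 : q ≠ ⊥)
    (l n : ℕ) :
    Module.lengthLT R ((R ⧸ p ^ l) →ₗ[R] (R ⧸ q ^ n)) =
      if p = q then ((min l n : ℕ) : ℕ∞) else 0 := by
  have key := Ideal.length_quotient_eq_length_linearMap_add (p ^ l) (q ^ n)
  rw [Module.lengthLT_eq_length]
  split_ifs with hpq
  · subst hpq
    rw [Ideal.colon_pow_pow hq0, Ideal.length_quotient_pow hq0, Ideal.length_quotient_pow hq0]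
      at key
    rw [ENat.eq_natCast_sub_of_natCast_eq_add key, Nat.sub_sub_eq_min, min_comm]
  · rw [Ideal.colon_eq_self_of_sup_eq_top (Ideal.pow_sup_pow_eq_top (hp.coprime_of_ne hq hpq)),
      Ideal.length_quotient_pow hq0] at key
    rw [ENat.eq_natCast_sub_of_natCast_eq_add key, Nat.sub_self, Nat.cast_zero]

open Classical in
theorem statement9 (R : Type*) [CommRing R] [IsDedekindDomain R] (hR : ¬IsField R)
    (p q : Ideal R) (hp : p.IsMaximal) (hq : q.IsMaximal) (hp0 : p ≠ ⊥) (hq0 : q ≠ ⊥)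
    (l n : ℕ) (hl : 1 ≤ l) (hn : 1 ≤ n) :
    Module.lengthLT R ((R ⧸ p ^ l) →ₗ[R] (R ⧸ q ^ n)) =
      if p = q then ((min l n : ℕ) : ℕ∞) else 0 :=
  statement9_general R p q hp hq hq0 l n
end

section
/- Let R be a Dedekind domain that is not a field with fraction field K, let p ⊆ R be a nonzero maximal ideal, and let n ≥ 1. Let M be a finitely generated R-module together with an R-linear isomorphism M ≅ F × ∏_{i ∈ Fin k} R/(q_i^{l_i}), where F is a finitely generated projective R-module, each q_i is a nonzero maximal ideal of R, and each l_i ≥ 1. Then the length of the R-module Hom_R(M, R/p^n) equals n · dim_K (K ⊗_R F) + Σ_{i ∈ Fin k, q_i = p} min(l_i, n). (This is the Hilbert function of the representable functor Hom_R(M, −) at (p, n), computed from the rank and the multiplicities of M.) -/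
/-!
`Hom(M, R/pⁿ)` splits along the decomposition of `M`. For a cyclic summand, `Hom(R/I, R/J)` is
the `I`-torsion of `R/J`, namely `(J : I)/J`, so its length is `ℓ(R/J) - ℓ(R/(J : I))`. For
`J = pⁿ` and `I = qˡ` the colon ideal is `pⁿ` when `q ≠ p` (the ideals are coprime) and `pⁿ⁻ˡ`
when `q = p` (cancellation of ideals), while `ℓ(R/pᵐ) = m` because `R/pᵐ ≅ R_p/𝔪ᵐ` with `R_p` a
DVR. For the projective summand, `Hom_R(F, R/pⁿ) = Hom_{R/pⁿ}(R/pⁿ ⊗ F, R/pⁿ)`, and `R/pⁿ ⊗ F`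
is free over the local ring `R/pⁿ` of rank `rank F = dim_K (K ⊗ F)`, giving length `n · rank F`.
-/

open TensorProduct

/-- The length of a module: the supremum of the lengths of (strictly increasing finite) chains
of submodules, valued in `ℕ∞`. -/
noncomputable def Module.length' (R M : Type*) [Ring R] [AddCommGroup M] [Module R M] : ℕ∞ :=
  ⨆ s : LTSeries (Submodule R M), (s.length : ℕ∞)

theorem Module.length'_eq_length (R M : Type*) [Ring R] [AddCommGroup M] [Module R M] :
    Module.length' R M = Module.length R M := by
  apply WithBot.coe_injective
  rw [Module.coe_length, Order.krullDim_eq_iSup_length]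
  rfl

theorem Module.length_quotient_eq_length_map_add {R M : Type*} [Ring R] [AddCommGroup M]
    [Module R M] {N K : Submodule R M} (h : N ≤ K) :
    Module.length R (M ⧸ N) = Module.length R (K.map N.mkQ) + Module.length R (M ⧸ K) := by
  have hker : LinearMap.ker (N.factor h) = K.map N.mkQ := by
    simp [Submodule.factor, Submodule.ker_mapQ]
  rw [← hker]
  exact Module.length_eq_add_of_exact _ _ (Submodule.subtype_injective _)
    (Submodule.factor_surjective h) (LinearMap.exact_subtype_ker_map _)

section QuotientPow

variable {R : Type*} [CommRing R] (p : Ideal R) [p.IsMaximal] (n : ℕ)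

theorem Localization.AtPrime.algebraMap_quotient_maximalIdeal_pow_surjective :
    Function.Surjective (algebraMap R (Localization.AtPrime p ⧸
      IsLocalRing.maximalIdeal (Localization.AtPrime p) ^ n)) := by
  let e := IsLocalization.AtPrime.equivQuotMaximalIdealPow p (Localization.AtPrime p) n
  have h : ⇑(algebraMap R _) = e ∘ Ideal.Quotient.mk (p ^ n) := funext fun x => (e.commutes x).symm
  rw [h]
  exact e.surjective.comp Ideal.Quotient.mk_surjective

theorem Ideal.Quotient.isLocalRing_pow (hn : n ≠ 0) : IsLocalRing (R ⧸ p ^ n) := by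
  have : Nontrivial (R ⧸ p ^ n) := Ideal.Quotient.nontrivial_iff.mpr
    (Ideal.pow_eq_top_iff.not.mpr (by simp [hn, Ideal.IsMaximal.ne_top ‹_›]))
  let e := (IsLocalization.AtPrime.equivQuotMaximalIdealPow p (Localization.AtPrime p) n).symm
  exact .of_surjective' (e.toRingHom.comp (Ideal.Quotient.mk _))
    (e.surjective.comp Ideal.Quotient.mk_surjective)

theorem Ideal.length_quotient_pow_s11 [IsDedekindDomain R] (hp0 : p ≠ ⊥) :
    Module.length R (R ⧸ p ^ n) = n := by
  let Rₚ := Localization.AtPrime p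
  have := IsLocalization.AtPrime.isDiscreteValuationRing_of_dedekind_domain R hp0 Rₚ
  rw [(IsLocalization.AtPrime.equivQuotMaximalIdealPow p Rₚ n).toLinearEquiv.length_eq,
    Module.length_eq_of_surjective
      (Localization.AtPrime.algebraMap_quotient_maximalIdeal_pow_surjective p n),
    ← Module.length_eq_of_surjective (S := Rₚ) Ideal.Quotient.mk_surjective,
    IsDiscreteValuationRing.length_quotient_pow_maximalIdeal]

end QuotientPow

section Torsion

variable {R : Type*} [CommRing R]

def Ideal.quotientLinearMapEquivTorsionBySet (I : Ideal R) (N : Type*) [AddCommGroup N]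
    [Module R N] : ((R ⧸ I) →ₗ[R] N) ≃ₗ[R] Submodule.torsionBySet R N I where
  toFun f := ⟨f 1, (Submodule.mem_torsionBySet_iff _ _).mpr fun a => by
    rw [← map_smul, Algebra.smul_def, mul_one, Ideal.Quotient.algebraMap_eq,
      Ideal.Quotient.eq_zero_iff_mem.mpr a.2, map_zero]⟩
  invFun x := I.liftQ (LinearMap.toSpanSingleton R N x) fun a ha => by
    simpa using (Submodule.mem_torsionBySet_iff _ _).mp x.2 ⟨a, ha⟩
  map_add' _ _ := rfl
  map_smul' _ _ := rfl
  left_inv f := Submodule.linearMap_qext I <| LinearMap.ext fun r => by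
    change r • f 1 = f (Ideal.Quotient.mk I r)
    rw [← map_smul, Algebra.smul_def, mul_one, Ideal.Quotient.algebraMap_eq]
  right_inv x := Subtype.ext <| by
    change I.liftQ _ _ (Submodule.Quotient.mk 1) = _
    rw [Submodule.liftQ_apply, LinearMap.toSpanSingleton_apply, one_smul]

theorem Ideal.comap_mkQ_torsionBySet_quotient (I J : Ideal R) :
    (Submodule.torsionBySet R (R ⧸ J) I).comap J.mkQ = J.colon I := by
  ext r
  simp only [Submodule.mem_comap, Submodule.mkQ_apply, Submodule.mem_torsionBySet_iff,
    Subtype.forall, Submodule.mem_colon, smul_eq_mul]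
  simp [Algebra.smul_def, ← map_mul, Ideal.Quotient.eq_zero_iff_mem, mul_comm]

theorem Ideal.length_linearMap_quotient_add (I J : Ideal R) :
    Module.length R ((R ⧸ I) →ₗ[R] (R ⧸ J)) + Module.length R (R ⧸ J.colon I) =
      Module.length R (R ⧸ J) := by
  rw [Module.length_quotient_eq_length_map_add (Ideal.le_colon : J ≤ J.colon (I : Set R)),
    (I.quotientLinearMapEquivTorsionBySet (R ⧸ J)).length_eq,
    ← Ideal.comap_mkQ_torsionBySet_quotient I J,
    Submodule.map_comap_eq_of_surjective (Submodule.mkQ_surjective _)]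

theorem Ideal.colon_eq_self_of_sup_eq_top_s11 {I J : Ideal R} (h : I ⊔ J = ⊤) :
    J.colon (I : Set R) = J := by
  refine le_antisymm (fun r hr => ?_) Ideal.le_colon
  obtain ⟨a, ha, b, hb, hab⟩ := Submodule.mem_sup.mp (h ▸ Submodule.mem_top : (1 : R) ∈ I ⊔ J)
  have hr' : r = r * a + r * b := by rw [← mul_add, hab, mul_one]
  rw [hr']
  exact J.add_mem (Submodule.mem_colon.mp hr a ha) (J.mul_mem_left r hb)

end Torsion

/-- A finite flat module over a domain has the same rank at every prime, in particular at the
contraction of any prime of `S`. -/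
theorem Module.finrank_baseChange_of_free {R S F : Type*} [CommRing R] [IsDomain R] [CommRing S]
    [Nontrivial S] [Algebra R S] [AddCommGroup F] [Module R F] [Module.Flat R F]
    [Module.Finite R F] [Module.Free S (S ⊗[R] F)] :
    Module.finrank S (S ⊗[R] F) = Module.finrank R F := by
  obtain ⟨P, hP⟩ := Ideal.exists_maximal S
  have h := congr_fun (Module.rankAtStalk_eq_finrank_of_free (R := S) (M := S ⊗[R] F))
    ⟨P, hP.isPrime⟩
  rw [Pi.natCast_apply, Nat.cast_id] at h
  rw [← h, Module.rankAtStalk_baseChange, ← Ideal.finrank_fiber_eq_rankAtStalk,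
    Ideal.finrank_fiber_eq_finrank]

section Dedekind

variable {R : Type*} [CommRing R] [IsDedekindDomain R]

theorem Ideal.colon_pow_pow_s11 {p : Ideal R} (hp0 : p ≠ ⊥) (n l : ℕ) :
    (p ^ n).colon ((p ^ l : Ideal R) : Set R) = p ^ (n - l) := by
  ext r
  rw [Submodule.mem_colon]
  change (∀ s ∈ p ^ l, r * s ∈ p ^ n) ↔ _
  rw [← Ideal.span_singleton_mul_le_iff]
  rcases le_or_gt l n with hln | hnl
  · have hsplit : p ^ n = p ^ (n - l) * p ^ l := by rw [← pow_add, Nat.sub_add_cancel hln]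
    rw [hsplit, ← Ideal.dvd_iff_le, mul_dvd_mul_iff_right (pow_ne_zero l hp0), Ideal.dvd_iff_le,
      Ideal.span_singleton_le_iff_mem]
  · simp only [Nat.sub_eq_zero_of_le hnl.le, pow_zero, Ideal.one_eq_top, Submodule.mem_top,
      iff_true]
    exact Ideal.mul_le_right.trans (Ideal.pow_le_pow_right hnl.le)

open Classical in
theorem Ideal.length_linearMap_quotient_pow {p q : Ideal R} [p.IsMaximal] [hq : q.IsMaximal]
    (hp0 : p ≠ ⊥) (l n : ℕ) :
    Module.length R ((R ⧸ q ^ l) →ₗ[R] (R ⧸ p ^ n)) = (if q = p then min l n else 0 : ℕ) := by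
  set k := if q = p then min l n else 0
  have hkn : k ≤ n := by unfold k; split_ifs <;> omega
  have hcolon : (p ^ n).colon ((q ^ l : Ideal R) : Set R) = p ^ (n - k) := by
    unfold k
    split_ifs with hqp
    · subst hqp
      rw [Ideal.colon_pow_pow_s11 hp0]
      congr 1
      omega
    · rw [Nat.sub_zero]
      refine Ideal.colon_eq_self_of_sup_eq_top_s11 (Ideal.isCoprime_iff_sup_eq.mp ?_)
      exact (Ideal.isCoprime_iff_sup_eq.mpr (hq.coprime_of_ne ‹_› hqp)).pow
  have h := Ideal.length_linearMap_quotient_add (q ^ l) (p ^ n)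
  rw [hcolon, Ideal.length_quotient_pow_s11 p _ hp0, Ideal.length_quotient_pow_s11 p _ hp0] at h
  generalize Module.length R ((R ⧸ q ^ l) →ₗ[R] (R ⧸ p ^ n)) = L at h ⊢
  obtain ⟨m, rfl⟩ := ENat.ne_top_iff_exists.mp (show L ≠ ⊤ by rintro rfl; simp at h)
  norm_cast at h ⊢
  omega

theorem Ideal.length_linearMap_quotient_pow_of_projective {p : Ideal R} [p.IsMaximal]
    (hp0 : p ≠ ⊥) {n : ℕ} (hn : n ≠ 0) (F : Type*) [AddCommGroup F] [Module R F]
    [Module.Finite R F] [Module.Projective R F] :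
    Module.length R (F →ₗ[R] (R ⧸ p ^ n)) = Module.finrank R F * n := by
  have := Ideal.Quotient.isLocalRing_pow p n hn
  have : Module.Free (R ⧸ p ^ n) ((R ⧸ p ^ n) ⊗[R] F) := Module.free_of_flat_of_isLocalRing
  let b := Module.Free.chooseBasis (R ⧸ p ^ n) ((R ⧸ p ^ n) ⊗[R] F)
  let e : (F →ₗ[R] (R ⧸ p ^ n)) ≃ₗ[R] (_ → R ⧸ p ^ n) :=
    ((LinearMap.liftBaseChangeEquiv (R ⧸ p ^ n)).trans
      (b.constr (R ⧸ p ^ n)).symm).restrictScalars R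
  rw [e.length_eq, Module.length_pi, ENat.card_eq_coe_fintype_card,
    ← Module.finrank_eq_card_chooseBasisIndex, Module.finrank_baseChange_of_free,
    Ideal.length_quotient_pow_s11 p n hp0]

end Dedekind

open Classical in
theorem statement11_general (R : Type*) [CommRing R] [IsDedekindDomain R]
    (K : Type*) [Field K] [Algebra R K]
    (p : Ideal R) (hp : p.IsMaximal) (hp0 : p ≠ ⊥) (n : ℕ) (hn : 1 ≤ n)
    (M : Type*) [AddCommGroup M] [Module R M]
    (F : Type*) [AddCommGroup F] [Module R F] [Module.Finite R F] [Module.Projective R F]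
    (k : ℕ) (q : Fin k → Ideal R) (l : Fin k → ℕ)
    (hq : ∀ i, (q i).IsMaximal)
    (e : M ≃ₗ[R] F × ((i : Fin k) → R ⧸ (q i ^ l i))) :
    Module.length' R (M →ₗ[R] (R ⧸ p ^ n)) =
      ((n * Module.finrank K (K ⊗[R] F) +
        ∑ i ∈ Finset.univ.filter (fun i => q i = p), min (l i) n : ℕ) : ℕ∞) := by
  have hsummand (i : Fin k) := by
    have := hq i
    exact Ideal.length_linearMap_quotient_pow hp0 (l i) n (p := p) (q := q i)
  rw [Module.length'_eq_length,
    ((e.arrowCongr (LinearEquiv.refl R _)).trans (LinearMap.coprodEquiv R).symm).length_eq,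
    Module.length_prod,
    (LinearMap.lsum R (fun i => R ⧸ q i ^ l i) R (M := R ⧸ p ^ n)).symm.length_eq,
    Module.length_pi_of_fintype, Finset.sum_congr rfl fun i _ => hsummand i,
    Ideal.length_linearMap_quotient_pow_of_projective hp0 (by omega) F,
    Module.finrank_baseChange_of_free (S := K), Finset.sum_filter]
  push_cast
  ring

open Classical in
theorem statement11 (R : Type*) [CommRing R] [IsDedekindDomain R] (hR : ¬IsField R)
    (K : Type*) [Field K] [Algebra R K] [IsFractionRing R K]
    (p : Ideal R) (hp : p.IsMaximal) (hp0 : p ≠ ⊥) (n : ℕ) (hn : 1 ≤ n)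
    (M : Type*) [AddCommGroup M] [Module R M] [Module.Finite R M]
    (F : Type*) [AddCommGroup F] [Module R F] [Module.Finite R F] [Module.Projective R F]
    (k : ℕ) (q : Fin k → Ideal R) (l : Fin k → ℕ)
    (hq : ∀ i, (q i).IsMaximal) (hq0 : ∀ i, q i ≠ ⊥) (hl : ∀ i, 1 ≤ l i)
    (e : M ≃ₗ[R] F × ((i : Fin k) → R ⧸ (q i ^ l i))) :
    Module.length' R (M →ₗ[R] (R ⧸ p ^ n)) =
      ((n * Module.finrank K (K ⊗[R] F) +
        ∑ i ∈ Finset.univ.filter (fun i => q i = p), min (l i) n : ℕ) : ℕ∞) :=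
  statement11_general R K p hp hp0 n hn M F k q l hq e
end
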